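/- If p₁ and p₂ are odd primes with p₂ > √2 · p₁, then h(p₁²·p₂²) = 1. -/

import Mathlib

/-- The set `A_n` of pairs `(x, y)` of positive integers with `n = x(x+y)` and `1 ≤ y ≤ x-1`. -/
def lerchA (n : ℕ) : Finset (ℕ × ℕ) :=
  (Finset.range (n + 1) ×ˢ Finset.range (n + 1)).filter
    (fun p => 0 < p.1 ∧ 1 ≤ p.2 ∧ p.2 ≤ p.1 - 1 ∧ n = p.1 * (p.1 + p.2))

/-- The set `B_n` of positive integers `x` with `n = x²`. -/
def lerchB (n : ℕ) : Finset ℕ :=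
  (Finset.range (n + 1)).filter (fun x => 0 < x ∧ n = x ^ 2)

/-- The set `C_n` of positive integers `x` with `n = 2x²`. -/
def lerchC (n : ℕ) : Finset ℕ :=
  (Finset.range (n + 1)).filter (fun x => 0 < x ∧ n = 2 * x ^ 2)

/-- `h(n) = 2·|A_n| + |B_n| + |C_n|`, the `n`-th coefficient of the half Lerch sum. -/
def lerchh (n : ℕ) : ℕ := 2 * (lerchA n).card + (lerchB n).card + (lerchC n).card

/-!
Writing `n = x·d` with `d = x + y`, a point of `A_n` is a divisor `x` of `n` with `x² < n < 2x²`.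
For `n = p₁²p₂²` every divisor is `p₁ᵃp₂ᵇ` with `a, b ≤ 2`, and `p₂² > 2p₁²` rules out each of the
nine candidates, so `A_n = ∅`. Since `n = (p₁p₂)²` is a square, `B_n = {p₁p₂}`, and `C_n = ∅`
because `2` occurs to an even power in a square but to an odd power in `2x²`.
-/

theorem mem_lerchA {n : ℕ} {p : ℕ × ℕ} :
    p ∈ lerchA n ↔ 1 ≤ p.2 ∧ p.2 < p.1 ∧ n = p.1 * (p.1 + p.2) := by
  obtain ⟨x, y⟩ := p
  simp only [lerchA, Finset.mem_filter, Finset.mem_product, Finset.mem_range]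
  constructor
  · rintro ⟨-, -, hy, hyx, rfl⟩
    exact ⟨hy, by omega, rfl⟩
  · rintro ⟨hy, hyx, rfl⟩
    have hx : x ≤ x * (x + y) := Nat.le_mul_of_pos_right x (by omega)
    exact ⟨⟨by omega, by omega⟩, by omega, hy, by omega, rfl⟩

theorem lerchA_eq_empty {n : ℕ} (h : ∀ x, x ∣ n → x ^ 2 < n → 2 * x ^ 2 ≤ n) : lerchA n = ∅ := by
  refine Finset.eq_empty_of_forall_notMem fun ⟨x, y⟩ hxy => ?_
  obtain ⟨hy, hyx, rfl⟩ := mem_lerchA.mp hxy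
  have := h x (Dvd.intro _ rfl) (by nlinarith)
  nlinarith

theorem two_mul_sq_le_of_dvd_sq_mul_sq {p q x : ℕ} (hp : p.Prime) (hq : q.Prime)
    (hpq : 2 * p ^ 2 < q ^ 2) (hx : x ∣ p ^ 2 * q ^ 2) (hlt : x ^ 2 < p ^ 2 * q ^ 2) :
    2 * x ^ 2 ≤ p ^ 2 * q ^ 2 := by
  obtain ⟨_, _, hp', hq', rfl⟩ := Nat.dvd_mul.mp hx
  obtain ⟨a, ha, rfl⟩ := (Nat.dvd_prime_pow hp).mp hp'
  obtain ⟨b, hb, rfl⟩ := (Nat.dvd_prime_pow hq).mp hq'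
  have hP : 4 ≤ p ^ 2 := by nlinarith [hp.two_le]
  rw [mul_pow, pow_right_comm p, pow_right_comm q] at hlt ⊢
  generalize p ^ 2 = P, q ^ 2 = Q at *
  interval_cases a <;> interval_cases b <;> nlinarith

theorem lerchB_sq {m : ℕ} (hm : 0 < m) : lerchB (m ^ 2) = {m} := by
  ext x
  simp only [lerchB, Finset.mem_filter, Finset.mem_range, Finset.mem_singleton]
  constructor
  · rintro ⟨-, -, hx⟩
    exact (Nat.pow_left_injective two_ne_zero hx).symm
  · rintro rfl
    exact ⟨by nlinarith, hm, rfl⟩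

theorem sq_ne_two_mul_sq {m x : ℕ} (hx : x ≠ 0) : m ^ 2 ≠ 2 * x ^ 2 := by
  intro h
  have := congrArg (·.factorization 2) h
  simp only [Nat.factorization_pow, Nat.factorization_mul two_ne_zero (pow_ne_zero 2 hx),
    Finsupp.add_apply, Finsupp.smul_apply, smul_eq_mul, Nat.prime_two.factorization_self] at this
  omega

theorem lerchC_sq (m : ℕ) : lerchC (m ^ 2) = ∅ :=
  Finset.eq_empty_of_forall_notMem fun x hx => by
    simp only [lerchC, Finset.mem_filter] at hx
    exact sq_ne_two_mul_sq hx.2.1.ne' hx.2.2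

theorem two_mul_sq_lt_sq_of_sqrt_two_mul_lt {a b : ℝ} (ha : 0 ≤ a) (h : √2 * a < b) :
    2 * a ^ 2 < b ^ 2 := by
  have h0 : 0 ≤ √2 * a := by positivity
  calc 2 * a ^ 2 = (√2 * a) ^ 2 := by rw [mul_pow, Real.sq_sqrt zero_le_two]
    _ < b ^ 2 := pow_lt_pow_left₀ h h0 two_ne_zero

theorem h_prod_sq_big_general (p₁ p₂ : ℕ) (hp₁ : p₁.Prime) (hp₂ : p₂.Prime)
    (hbig : (p₂ : ℝ) > Real.sqrt 2 * p₁) :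
    lerchh (p₁ ^ 2 * p₂ ^ 2) = 1 := by
  have hsq : 2 * p₁ ^ 2 < p₂ ^ 2 := by
    exact_mod_cast two_mul_sq_lt_sq_of_sqrt_two_mul_lt (Nat.cast_nonneg p₁) hbig
  have hA : lerchA (p₁ ^ 2 * p₂ ^ 2) = ∅ :=
    lerchA_eq_empty fun x => two_mul_sq_le_of_dvd_sq_mul_sq hp₁ hp₂ hsq
  rw [lerchh, hA, ← mul_pow, lerchB_sq (Nat.mul_pos hp₁.pos hp₂.pos), lerchC_sq]
  rfl

/-- If `p₁` and `p₂` are odd primes with `p₂ > √2·p₁`, then `h(p₁²·p₂²) = 1`. -/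
theorem h_prod_sq_big (p₁ p₂ : ℕ) (hp₁ : p₁.Prime) (hodd₁ : Odd p₁)
    (hp₂ : p₂.Prime) (hodd₂ : Odd p₂)
    (hbig : (p₂ : ℝ) > Real.sqrt 2 * p₁) :
    lerchh (p₁ ^ 2 * p₂ ^ 2) = 1 :=
  h_prod_sq_big_general p₁ p₂ hp₁ hp₂ hbig
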